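/- arXiv:2310.05072 — 2 statements merged into one kernel-verified Lean document; each statement's English description precedes it below -/
import Mathlib

section
/- If X and Y are independent random variables each exponentially distributed with rate 1, then the CDF of their product Z = XY is F_Z(z) = 1 - 2√z·K₁(2√z) for z > 0, where K₁ is the first-order modified Bessel function of the second kind. -/
open MeasureTheory ProbabilityTheory Real

/-- Modified Bessel function of the second kind `K_ν(x)`, via the standard
integral representation `K_ν(x) = ∫₀^∞ exp(-x cosh t) cosh(ν t) dt`. -/
noncomputable def besselK (ν x : ℝ) : ℝ :=
  ∫ t in Set.Ioi (0:ℝ), Real.exp (-x * Real.cosh t) * Real.cosh (ν * t)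

open Set
open scoped ENNReal NNReal

lemma aux_integrable {a : ℝ} (ha : 0 < a) :
    Integrable (fun t : ℝ => Real.exp (|t| - a * Real.cosh t)) := by
  have hcont : Continuous (fun t : ℝ => Real.exp (|t| - a * Real.cosh t)) :=
    Real.continuous_exp.comp (continuous_abs.sub (continuous_const.mul Real.continuous_cosh))
  refine Integrable.mono'
    ((integrable_exp_neg_mul_sq (show (0:ℝ) < a/8 by positivity)).const_mul (Real.exp (2/a)))
    hcont.aestronglyMeasurable (Filter.Eventually.of_forall fun t => ?_)
  rw [Real.norm_eq_abs, abs_of_pos (Real.exp_pos _), ← Real.exp_add, Real.exp_le_exp]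
  have h1 : 1 + |t| + t^2/2 ≤ Real.exp |t| := by
    have := Real.sum_le_exp_of_nonneg (abs_nonneg t) 3
    simpa [Finset.sum_range_succ] using this
  have h2 : Real.exp |t| ≤ 2 * Real.cosh t := by
    rw [← Real.cosh_abs, Real.cosh_eq]
    nlinarith [Real.exp_pos (-|t|)]
  have hc2 : t^2/4 ≤ Real.cosh t := by nlinarith [abs_nonneg t]
  have h6 : a * (t^2/4) ≤ a * Real.cosh t := mul_le_mul_of_nonneg_left hc2 ha.le
  have h3 : |t| ≤ 2/a + a/8*t^2 := by
    rw [show (2:ℝ)/a + a/8*t^2 = (2 + a^2/8*t^2)/a by field_simp, le_div_iff₀ ha]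
    nlinarith [sq_nonneg (a*|t|-4), sq_abs t]
  linarith

lemma key_integral {z : ℝ} (hz : 0 < z) :
    ∫ x in Set.Ioi (0:ℝ), Real.exp (-(x + z/x))
      = 2 * Real.sqrt z * besselK 1 (2 * Real.sqrt z) := by
  have hc : 0 < Real.sqrt z := Real.sqrt_pos.mpr hz
  set c : ℝ := Real.sqrt z with hc_def
  have hc2 : c^2 = z := Real.sq_sqrt hz.le
  have ha : 0 < 2 * c := by positivity
  have hrange : (fun t : ℝ => c * Real.exp t) '' Set.univ = Set.Ioi 0 := by
    rw [Set.image_univ]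
    ext x
    simp only [Set.mem_range, Set.mem_Ioi]
    constructor
    · rintro ⟨t, rfl⟩; positivity
    · intro hx
      exact ⟨Real.log (x / c), by rw [Real.exp_log (by positivity)]; field_simp⟩
  have hinj : Set.InjOn (fun t : ℝ => c * Real.exp t) Set.univ := by
    intro s _ t _ h
    exact Real.exp_injective (mul_left_cancel₀ hc.ne' h)
  have hderiv : ∀ x ∈ Set.univ, HasDerivWithinAt (fun t : ℝ => c * Real.exp t)
      (c * Real.exp x) Set.univ x :=
    fun x _ => ((Real.hasDerivAt_exp x).const_mul c).hasDerivWithinAt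
  have hcov := integral_image_eq_integral_abs_deriv_smul MeasurableSet.univ hderiv hinj
    (fun x => Real.exp (-(x + z/x)))
  rw [hrange, Measure.restrict_univ] at hcov
  have hsimp : ∀ t : ℝ, |c * Real.exp t| • Real.exp (-(c * Real.exp t + z/(c * Real.exp t)))
      = c • Real.exp (t - (2*c) * Real.cosh t) := by
    intro t
    have he : Real.exp t ≠ 0 := (Real.exp_pos t).ne'
    have h1 : z / (c * Real.exp t) = c * Real.exp (-t) := by
      rw [← hc2, Real.exp_neg]
      field_simp
    rw [h1, smul_eq_mul, smul_eq_mul, abs_of_pos (by positivity), mul_assoc,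
      ← Real.exp_add, Real.cosh_eq]
    congr 2
    rw [Real.exp_neg]
    field_simp
    ring
  simp only [hsimp] at hcov
  rw [integral_smul, smul_eq_mul] at hcov
  have hint1 : Integrable (fun t : ℝ => Real.exp (t - (2*c) * Real.cosh t)) := by
    refine (aux_integrable ha).mono' ?_ (Filter.Eventually.of_forall fun t => ?_)
    · exact (Real.continuous_exp.comp ((continuous_id.sub
        (continuous_const.mul Real.continuous_cosh)))).aestronglyMeasurable
    · rw [Real.norm_eq_abs, abs_of_pos (Real.exp_pos _), Real.exp_le_exp]
      linarith [le_abs_self t]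
  have hint2 : Integrable (fun t : ℝ => Real.exp (-t - (2*c) * Real.cosh t)) := by
    refine (aux_integrable ha).mono' ?_ (Filter.Eventually.of_forall fun t => ?_)
    · exact (Real.continuous_exp.comp ((continuous_id.neg.sub
        (continuous_const.mul Real.continuous_cosh)))).aestronglyMeasurable
    · rw [Real.norm_eq_abs, abs_of_pos (Real.exp_pos _), Real.exp_le_exp]
      linarith [neg_abs_le t]
  have hJ' : (∫ t : ℝ, Real.exp (-t - (2*c) * Real.cosh t))
      = ∫ t : ℝ, Real.exp (t - (2*c) * Real.cosh t) := by
    have h := integral_neg_eq_self (fun t : ℝ => Real.exp (t - (2*c) * Real.cosh t)) volume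
    simp only [Real.cosh_neg] at h
    exact h
  have hsum : (∫ t : ℝ, Real.exp (t - (2*c) * Real.cosh t))
      + (∫ t : ℝ, Real.exp (-t - (2*c) * Real.cosh t))
      = ∫ t : ℝ, 2 * Real.cosh t * Real.exp (-((2*c) * Real.cosh t)) := by
    rw [← integral_add hint1 hint2]
    congr 1
    funext t
    simp only [Real.cosh_eq, sub_eq_add_neg, Real.exp_add]
    ring
  have heven : (∫ t : ℝ, 2 * Real.cosh t * Real.exp (-((2*c) * Real.cosh t)))
      = 2 * ∫ t in Set.Ioi (0:ℝ), 2 * Real.cosh t * Real.exp (-((2*c) * Real.cosh t)) := by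
    have := integral_comp_abs
      (f := fun t : ℝ => 2 * Real.cosh t * Real.exp (-((2*c) * Real.cosh t)))
    rw [← this]
    congr 1
    funext t
    rw [Real.cosh_abs]
  have hbessel : (∫ t in Set.Ioi (0:ℝ), 2 * Real.cosh t * Real.exp (-((2*c) * Real.cosh t)))
      = 2 * besselK 1 (2*c) := by
    have hfun : (fun t : ℝ => 2 * Real.cosh t * Real.exp (-((2*c) * Real.cosh t)))
        = fun t : ℝ => (2:ℝ) • (Real.exp (-(2*c) * Real.cosh t) * Real.cosh (1 * t)) := by
      funext t
      rw [smul_eq_mul, one_mul, neg_mul]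
      ring
    rw [hfun, integral_smul, smul_eq_mul, besselK]
  have hJval : (∫ t : ℝ, Real.exp (t - (2*c) * Real.cosh t)) = 2 * besselK 1 (2*c) := by
    rw [hJ'] at hsum
    rw [hbessel] at heven
    linarith [hsum, heven]
  rw [hcov, hJval]
  ring

lemma expMeasure_eq : expMeasure 1 = volume.withDensity (exponentialPDF 1) := rfl

lemma expMeasure_Ioi {t : ℝ} (ht : 0 ≤ t) :
    expMeasure 1 (Set.Ioi t) = ENNReal.ofReal (Real.exp (-t)) := by
  haveI : IsProbabilityMeasure (expMeasure 1) := isProbabilityMeasure_expMeasure one_pos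
  have h1 : expMeasure 1 (Set.Iic t) = ENNReal.ofReal (1 - Real.exp (-t)) := by
    rw [expMeasure_eq, withDensity_apply _ measurableSet_Iic,
      lintegral_exponentialPDF_eq_antiDeriv one_pos t, if_pos ht, one_mul]
  have h2 := measure_compl (measurableSet_Iic : MeasurableSet (Set.Iic t))
    (measure_ne_top (expMeasure 1) _)
  rw [compl_Iic, measure_univ, h1] at h2
  rw [h2, show (1:ℝ≥0∞) = ENNReal.ofReal 1 from ENNReal.ofReal_one.symm,
    ← ENNReal.ofReal_sub _ (by simp [Real.exp_le_one_iff.mpr (show -t ≤ 0 by linarith)])]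
  norm_num

/-- If `X` and `Y` are independent `Exp(1)` random variables, then the CDF of
`Z = X * Y` is `F_Z(z) = 1 - 2√z · K₁(2√z)` for `z > 0`. -/
theorem cdf_product_of_indep_exponential
    {Ω : Type*} [MeasureSpace Ω] [IsProbabilityMeasure (ℙ : Measure Ω)]
    (X Y : Ω → ℝ) (hX : Measurable X) (hY : Measurable Y)
    (hindep : IndepFun X Y ℙ)
    (hXlaw : Measure.map X ℙ = expMeasure 1)
    (hYlaw : Measure.map Y ℙ = expMeasure 1)
    (z : ℝ) (hz : 0 < z) :
    (ℙ {ω | X ω * Y ω ≤ z}).toReal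
      = 1 - 2 * Real.sqrt z * besselK 1 (2 * Real.sqrt z) := by
  haveI : IsProbabilityMeasure (expMeasure 1) := isProbabilityMeasure_expMeasure one_pos
  set μ := expMeasure 1 with hμ
  set T : Set (ℝ × ℝ) := {p : ℝ × ℝ | z < p.1 * p.2} with hT_def
  have hT : MeasurableSet T := measurableSet_lt measurable_const
    (measurable_fst.mul measurable_snd)
  have hsm : MeasurableSet {ω | z < X ω * Y ω} :=
    measurableSet_lt measurable_const (hX.mul hY)
  have hmap : Measure.map (fun ω => (X ω, Y ω)) ℙ = μ.prod μ := by
    have h := (indepFun_iff_map_prod_eq_prod_map_map hX.aemeasurable hY.aemeasurable).mp hindep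
    rw [h, hXlaw, hYlaw]
  have hP : ℙ {ω | z < X ω * Y ω} = (μ.prod μ) T := by
    rw [← hmap, Measure.map_apply (hX.prodMk hY) hT]
    rfl
  -- inner measure
  have hinner : ∀ x : ℝ, μ (Prod.mk x ⁻¹' T)
      = if 0 < x then ENNReal.ofReal (Real.exp (-(z/x))) else 0 := by
    intro x
    rcases lt_trichotomy x 0 with hx | hx | hx
    · rw [if_neg (by linarith)]
      have hpre : Prod.mk x ⁻¹' T = Set.Iio (z/x) := by
        ext y
        simp only [hT_def, Set.mem_preimage, Set.mem_setOf_eq, Set.mem_Iio]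
        constructor
        · intro h
          have h2 : x * y = y * x := mul_comm x y
          rw [lt_div_iff_of_neg hx]
          linarith
        · intro h
          have h2 := (lt_div_iff_of_neg hx).mp h
          linarith [mul_comm x y]
      have hzx : z / x ≤ 0 := le_of_lt (div_neg_of_pos_of_neg hz hx)
      rw [hpre, hμ, expMeasure_eq, withDensity_apply _ measurableSet_Iio,
        lintegral_exponentialPDF_of_nonpos hzx]
    · subst hx
      rw [if_neg (lt_irrefl 0)]
      have hpre : Prod.mk (0:ℝ) ⁻¹' T = ∅ := by
        ext y
        simp [hT_def, lt_asymm hz]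
      rw [hpre, measure_empty]
    · rw [if_pos hx]
      have hpre : Prod.mk x ⁻¹' T = Set.Ioi (z/x) := by
        ext y
        simp only [hT_def, Set.mem_preimage, Set.mem_setOf_eq, Set.mem_Ioi]
        constructor
        · intro h
          rw [div_lt_iff₀ hx]
          linarith [mul_comm x y]
        · intro h
          have h2 := (div_lt_iff₀ hx).mp h
          linarith [mul_comm y x]
      rw [hpre, hμ, expMeasure_Ioi (le_of_lt (div_pos hz hx))]
  -- measurability of the inner function
  have hg : Measurable (fun x : ℝ => μ (Prod.mk x ⁻¹' T)) :=
    measurable_measure_prodMk_left hT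
  have hpdf : Measurable (exponentialPDF 1) :=
    (measurable_exponentialPDFReal 1).ennreal_ofReal
  -- the product measure as a set lintegral
  have hprod : (μ.prod μ) T
      = ∫⁻ x in Set.Ioi (0:ℝ), ENNReal.ofReal (Real.exp (-(x + z/x))) := by
    rw [Measure.prod_apply hT]
    rw [show (∫⁻ x, μ (Prod.mk x ⁻¹' T) ∂μ) = ∫⁻ x, μ (Prod.mk x ⁻¹' T) ∂(volume.withDensity (exponentialPDF 1)) by rw [← expMeasure_eq, ← hμ]]
    rw [lintegral_withDensity_eq_lintegral_mul volume hpdf hg]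
    rw [← lintegral_add_compl (fun x => (exponentialPDF 1 * fun x => μ (Prod.mk x ⁻¹' T)) x)
      (measurableSet_Ioi (a := (0:ℝ)))]
    have hIic : (∫⁻ x in (Set.Ioi (0:ℝ))ᶜ,
        (exponentialPDF 1 * fun x => μ (Prod.mk x ⁻¹' T)) x) = 0 := by
      rw [compl_Ioi]
      rw [setLIntegral_congr_fun_ae measurableSet_Iic
        (ae_of_all _ (fun x (hx : x ≤ 0) => ?_)), lintegral_zero]
      show exponentialPDF 1 x * μ (Prod.mk x ⁻¹' T) = 0
      rw [hinner x, if_neg (not_lt.mpr hx), mul_zero]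
    rw [hIic, add_zero]
    refine setLIntegral_congr_fun_ae measurableSet_Ioi (ae_of_all _ (fun x hx => ?_))
    show exponentialPDF 1 x * μ (Prod.mk x ⁻¹' T) = ENNReal.ofReal (Real.exp (-(x + z/x)))
    have hx : (0:ℝ) < x := hx
    rw [hinner x, if_pos hx, exponentialPDF_of_nonneg hx.le, one_mul,
      ← ENNReal.ofReal_mul (Real.exp_pos _).le, ← Real.exp_add]
    congr 1
    ring
  -- toReal of the lintegral
  have htoReal : ((μ.prod μ) T).toReal = ∫ x in Set.Ioi (0:ℝ), Real.exp (-(x + z/x)) := by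
    rw [hprod]
    have hmf : AEStronglyMeasurable (fun x : ℝ => Real.exp (-(x + z/x)))
        (volume.restrict (Set.Ioi 0)) := by
      exact (((measurable_id.add (measurable_const.div measurable_id)).neg).exp).aestronglyMeasurable
    rw [integral_eq_lintegral_of_nonneg_ae (ae_of_all _ fun x => (Real.exp_pos _).le) hmf]
  -- assemble
  have hcompl : ℙ {ω | X ω * Y ω ≤ z} = 1 - ℙ {ω | z < X ω * Y ω} := by
    have hset : {ω | X ω * Y ω ≤ z} = {ω | z < X ω * Y ω}ᶜ := by
      ext ω; simp [not_lt]
    rw [hset, measure_compl hsm (measure_ne_top _ _), measure_univ]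
  rw [hcompl, ENNReal.toReal_sub_of_le prob_le_one ENNReal.one_ne_top, ENNReal.toReal_one,
    hP, htoReal, key_integral hz]
end

section
/- For c > 0 and nonnegative integer v, ∫₀^∞ x^v · Q(√(c·x)) dx = (v!/2)·(2/c)^{v+1}·((2v+1)!!/(2v+2)!!), where Q(x) = (1/√(2π))∫_x^∞ e^{-t²/2} dt is the Gaussian Q-function. -/
open MeasureTheory Real Nat
open Set

/-- The Gaussian Q-function `Q(x) = (1/√(2π)) ∫ₓ^∞ e^{-t²/2} dt`. -/
noncomputable def Qfun (x : ℝ) : ℝ :=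
  (1 / Real.sqrt (2*π)) * ∫ t in Set.Ioi x, Real.exp (-t^2/2)

lemma gauss_int (b : ℝ) (hb : 0 < b) : Integrable (fun t : ℝ => Real.exp (-t^2/b)) := by
  have := integrable_exp_neg_mul_sq (show (0:ℝ) < 1/b by positivity)
  exact this.congr (Filter.Eventually.of_forall (fun x => by norm_num; ring_nf))

lemma gauss_cont : Continuous (fun t : ℝ => Real.exp (-t^2/2)) := by continuity

lemma Ioi_split {u : ℝ} (hu : 0 ≤ u) :
    (∫ t in Set.Ioi u, Real.exp (-t^2/2))
      = (∫ t in Set.Ioi (0:ℝ), Real.exp (-t^2/2)) - ∫ t in (0:ℝ)..u, Real.exp (-t^2/2) := by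
  rw [intervalIntegral.integral_of_le hu, eq_sub_iff_add_eq, add_comm,
    ← setIntegral_union (Set.Ioc_disjoint_Ioi le_rfl) measurableSet_Ioi
      ((gauss_int 2 two_pos).integrableOn) ((gauss_int 2 two_pos).integrableOn),
    Set.Ioc_union_Ioi_eq_Ioi hu]

lemma Q_hasDeriv {u : ℝ} (hu : 0 < u) :
    HasDerivAt Qfun (-(1 / Real.sqrt (2*π)) * Real.exp (-u^2/2)) u := by
  have key : HasDerivAt (fun x : ℝ => (1 / Real.sqrt (2*π)) *
      ((∫ t in Set.Ioi (0:ℝ), Real.exp (-t^2/2)) - ∫ t in (0:ℝ)..x, Real.exp (-t^2/2)))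
      (-(1 / Real.sqrt (2*π)) * Real.exp (-u^2/2)) u := by
    have h1 : HasDerivAt (fun x : ℝ => ∫ t in (0:ℝ)..x, Real.exp (-t^2/2))
        (Real.exp (-u^2/2)) u := by
      exact intervalIntegral.integral_hasDerivAt_right
        ((gauss_int 2 two_pos).intervalIntegrable)
        (gauss_cont.stronglyMeasurableAtFilter _ _) gauss_cont.continuousAt
    have := ((hasDerivAt_const u (∫ t in Set.Ioi (0:ℝ), Real.exp (-t^2/2))).sub h1).const_mul (1 / Real.sqrt (2*π))
    refine this.congr_deriv ?_; ring
  refine key.congr_of_eventuallyEq ?_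
  filter_upwards [Ioi_mem_nhds hu] with x hx
  rw [Qfun, Ioi_split (le_of_lt hx)]

lemma Q_nonneg (u : ℝ) : 0 ≤ Qfun u := by
  apply mul_nonneg (by positivity)
  exact setIntegral_nonneg measurableSet_Ioi (fun t _ => (Real.exp_pos _).le)

lemma Q_antitone : Antitone Qfun := by
  intro a b hab
  apply mul_le_mul_of_nonneg_left _ (by positivity)
  exact setIntegral_mono_set ((gauss_int 2 two_pos).integrableOn)
    (Filter.Eventually.of_forall fun t => (Real.exp_pos _).le)
    (Filter.Eventually.of_forall <| Set.Ioi_subset_Ioi hab)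

lemma Q_le {u : ℝ} (hu : 0 ≤ u) :
    Qfun u ≤ (1 / Real.sqrt (2*π)) * (∫ t in Set.Ioi (0:ℝ), Real.exp (-t^2/4)) * Real.exp (-u^2/4) := by
  rw [Qfun, mul_assoc]
  apply mul_le_mul_of_nonneg_left _ (by positivity)
  calc (∫ t in Set.Ioi u, Real.exp (-t^2/2))
      ≤ ∫ t in Set.Ioi u, Real.exp (-u^2/4) * Real.exp (-t^2/4) := by
        apply setIntegral_mono_on ((gauss_int 2 two_pos).integrableOn)
          (((gauss_int 4 (by norm_num)).integrableOn).const_mul _) measurableSet_Ioi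
        intro t ht
        rw [← Real.exp_add]
        apply Real.exp_le_exp.2
        nlinarith [Set.mem_Ioi.mp ht, hu.trans (Set.mem_Ioi.mp ht).le]
    _ ≤ ∫ t in Set.Ioi (0:ℝ), Real.exp (-u^2/4) * Real.exp (-t^2/4) := by
        apply setIntegral_mono_set (((gauss_int 4 (by norm_num)).integrableOn).const_mul _)
          (Filter.Eventually.of_forall fun t => by positivity)
          (Filter.Eventually.of_forall <| Set.Ioi_subset_Ioi hu)
    _ = (∫ t in Set.Ioi (0:ℝ), Real.exp (-t^2/4)) * Real.exp (-u^2/4) := by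
        rw [integral_const_mul]; ring

lemma int_rpow_exp {s b : ℝ} (hs : -1 < s) (hb : 0 < b) :
    IntegrableOn (fun x : ℝ => x ^ s * Real.exp (-b * x)) (Set.Ioi 0) := by
  have := integrableOn_rpow_mul_exp_neg_mul_rpow hs zero_lt_one hb
  exact this.congr_fun (fun x _ => by simp only [Real.rpow_one]) measurableSet_Ioi

lemma Gamma_half_shift (v : ℕ) :
    Real.Gamma ((v:ℝ) + 3/2) = Real.sqrt π * ((2*v+1)‼ : ℝ) / 2^(v+1) := by
  induction v with
  | zero =>
      have : ((0:ℕ):ℝ) + 3/2 = 1/2 + 1 := by norm_num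
      rw [this, Real.Gamma_add_one (by norm_num), Real.Gamma_one_half_eq]
      norm_num [Nat.doubleFactorial]; ring
  | succ n ih =>
      have h1 : ((n+1:ℕ):ℝ) + 3/2 = ((n:ℝ) + 3/2) + 1 := by push_cast; ring
      have h2 : 2*(n+1)+1 = (2*n+1)+2 := by ring
      rw [h1, Real.Gamma_add_one (by positivity), ih, h2, Nat.doubleFactorial_add_two]
      push_cast
      ring

lemma sqrt_cx_deriv {c x : ℝ} (hc : 0 < c) (hx : 0 < x) :
    HasDerivAt (fun y : ℝ => Real.sqrt (c*y)) (c / (2 * Real.sqrt (c*x))) x := by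
  have h1 : HasDerivAt (fun y : ℝ => c*y) c x := by
    simpa using (hasDerivAt_id x).const_mul c
  have h2 := (Real.hasDerivAt_sqrt (by positivity : c*x ≠ 0)).comp x h1
  refine h2.congr_deriv ?_
  field_simp

lemma main_deriv {c : ℝ} (hc : 0 < c) (v : ℕ) {x : ℝ} (hx : 0 < x) :
    HasDerivAt (fun y : ℝ => y^(v+1) * Qfun (Real.sqrt (c*y)))
      (((v:ℝ)+1) * (x^v * Qfun (Real.sqrt (c*x)))
        - (c / (2 * Real.sqrt c * Real.sqrt (2*π)))
          * (x ^ ((v:ℝ) + 1/2) * Real.exp (-(c/2) * x))) x := by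
  have hs : 0 < Real.sqrt (c*x) := Real.sqrt_pos.2 (by positivity)
  have hQ := (Q_hasDeriv hs).comp x (sqrt_cx_deriv hc hx)
  have hpow := hasDerivAt_pow (v+1) x
  have h := hpow.mul hQ
  refine h.congr_deriv ?_
  symm
  simp only [Function.comp_apply]
  have hsq : Real.sqrt (c*x) ^ 2 = c*x := Real.sq_sqrt (by positivity)
  have hsm : Real.sqrt (c*x) = Real.sqrt c * Real.sqrt x := Real.sqrt_mul hc.le x
  have hxr : x ^ ((v:ℝ) + 1/2) = x ^ v * Real.sqrt x := by
    rw [Real.rpow_add hx, Real.rpow_natCast, ← Real.sqrt_eq_rpow]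
  have hxx : Real.sqrt x * Real.sqrt x = x := Real.mul_self_sqrt hx.le
  have hcc : Real.sqrt c * Real.sqrt c = c := Real.mul_self_sqrt hc.le
  have hsx : Real.sqrt x ≠ 0 := by positivity
  have hsc : Real.sqrt c ≠ 0 := by positivity
  have hsp : Real.sqrt (2*π) ≠ 0 := by positivity
  rw [hsq, hxr, hsm]
  have : -(c*x)/2 = -(c/2)*x := by ring
  rw [this]
  push_cast
  field_simp
  ring_nf
  rw [Real.sq_sqrt hx.le]
  ring

/-- For `c > 0` and `v : ℕ`,
`∫₀^∞ x^v Q(√(cx)) dx = (v!/2)(2/c)^{v+1}((2v+1)‼/(2v+2)‼)`. -/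
theorem integral_pow_mul_Q (c : ℝ) (hc : 0 < c) (v : ℕ) :
    ∫ x in Set.Ioi (0:ℝ), x ^ v * Qfun (Real.sqrt (c * x))
      = ((v.factorial : ℝ) / 2) * (2/c) ^ (v+1)
          * (((2*v+1)‼ : ℝ) / ((2*v+2)‼ : ℝ)) := by
  have hπ := Real.pi_pos
  set K := ∫ t in Set.Ioi (0:ℝ), Real.exp (-t^2/4) with hK
  have hK0 : 0 ≤ K := setIntegral_nonneg measurableSet_Ioi fun t _ => (Real.exp_pos _).le
  have hM0 : 0 ≤ (1 / Real.sqrt (2*π)) * K := by positivity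
  -- pointwise bound
  have hbd : ∀ x : ℝ, 0 < x → x ^ v * Qfun (Real.sqrt (c*x))
      ≤ ((1 / Real.sqrt (2*π)) * K) * (x ^ (v:ℝ) * Real.exp (-(c/4)*x)) := by
    intro x hx
    have hQb := Q_le (Real.sqrt_nonneg (c*x))
    rw [Real.sq_sqrt (by positivity : (0:ℝ) ≤ c*x)] at hQb
    rw [show -(c*x)/4 = -(c/4)*x by ring] at hQb
    rw [← hK] at hQb
    calc x ^ v * Qfun (Real.sqrt (c*x))
        ≤ x ^ v * ((1 / Real.sqrt (2*π)) * K * Real.exp (-(c/4)*x)) :=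
          mul_le_mul_of_nonneg_left hQb (by positivity)
      _ = ((1 / Real.sqrt (2*π)) * K) * (x ^ (v:ℝ) * Real.exp (-(c/4)*x)) := by
          rw [Real.rpow_natCast]; ring
  -- measurability
  have hmeas : AEStronglyMeasurable (fun x : ℝ => x ^ v * Qfun (Real.sqrt (c*x)))
      (volume.restrict (Set.Ioi 0)) := by
    refine AEStronglyMeasurable.mul ?_ ?_
    · exact (continuous_pow v).aestronglyMeasurable.restrict
    · exact ((Q_antitone.measurable).comp
        ((Real.continuous_sqrt.comp (continuous_const.mul continuous_id)).measurable)).aestronglyMeasurable.restrict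
  -- integrability of the target integrand
  have hvcast : (-1:ℝ) < (v:ℝ) := lt_of_lt_of_le (by norm_num) (Nat.cast_nonneg v)
  have hint1 : IntegrableOn (fun x : ℝ => x ^ v * Qfun (Real.sqrt (c*x))) (Set.Ioi 0) := by
    refine Integrable.mono' ((int_rpow_exp (s := (v:ℝ)) (b := c/4) hvcast (by positivity)).const_mul
      ((1 / Real.sqrt (2*π)) * K)) hmeas ?_
    rw [ae_restrict_iff' measurableSet_Ioi]
    filter_upwards with x hx
    rw [Real.norm_eq_abs, abs_of_nonneg (mul_nonneg (pow_nonneg (le_of_lt hx) v) (Q_nonneg _))]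
    exact hbd x hx
  have hint2 : IntegrableOn (fun x : ℝ => (c / (2 * Real.sqrt c * Real.sqrt (2*π)))
      * (x ^ ((v:ℝ)+1/2) * Real.exp (-(c/2)*x))) (Set.Ioi 0) :=
    (int_rpow_exp (by linarith : (-1:ℝ) < (v:ℝ)+1/2) (by positivity)).const_mul _
  -- continuity at 0
  have hcont : ContinuousWithinAt (fun y : ℝ => y^(v+1) * Qfun (Real.sqrt (c*y)))
      (Set.Ici 0) 0 := by
    rw [ContinuousWithinAt, show (0:ℝ)^(v+1) * Qfun (Real.sqrt (c*0)) = 0 by simp]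
    apply squeeze_zero' (g := fun y : ℝ => y^(v+1) * Qfun 0)
    · filter_upwards [self_mem_nhdsWithin] with y (hy : (0:ℝ) ≤ y)
      exact mul_nonneg (pow_nonneg hy _) (Q_nonneg _)
    · filter_upwards [self_mem_nhdsWithin] with y (hy : (0:ℝ) ≤ y)
      exact mul_le_mul_of_nonneg_left (Q_antitone (Real.sqrt_nonneg _)) (pow_nonneg hy _)
    · have := (((continuous_pow (v+1)).tendsto (0:ℝ)).mono_left (nhdsWithin_le_nhds (s := Set.Ici 0))).mul_const (Qfun 0)
      simpa using this
  -- limit at infinity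
  have htend : Filter.Tendsto (fun y : ℝ => y^(v+1) * Qfun (Real.sqrt (c*y)))
      Filter.atTop (nhds 0) := by
    apply squeeze_zero' (g := fun y : ℝ => ((1 / Real.sqrt (2*π)) * K)
      * (y ^ ((v:ℝ)+1) * Real.exp (-(c/4)*y)))
    · filter_upwards [Filter.eventually_gt_atTop (0:ℝ)] with x hx
      exact mul_nonneg (by positivity) (Q_nonneg _)
    · filter_upwards [Filter.eventually_gt_atTop (0:ℝ)] with x hx
      have := hbd x hx
      calc x^(v+1) * Qfun (Real.sqrt (c*x)) = x * (x ^ v * Qfun (Real.sqrt (c*x))) := by ring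
        _ ≤ x * (((1 / Real.sqrt (2*π)) * K) * (x ^ (v:ℝ) * Real.exp (-(c/4)*x))) :=
            mul_le_mul_of_nonneg_left this hx.le
        _ = ((1 / Real.sqrt (2*π)) * K) * ((x ^ (v:ℝ) * x) * Real.exp (-(c/4)*x)) := by ring
        _ = ((1 / Real.sqrt (2*π)) * K) * (x ^ ((v:ℝ)+1) * Real.exp (-(c/4)*x)) := by
            rw [Real.rpow_add_one (ne_of_gt hx)]
    · have := (tendsto_rpow_mul_exp_neg_mul_atTop_nhds_zero ((v:ℝ)+1) (c/4)
        (by positivity)).const_mul ((1 / Real.sqrt (2*π)) * K)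
      simpa using this
  -- FTC
  have key := integral_Ioi_of_hasDerivAt_of_tendsto hcont
    (fun x hx => main_deriv hc v (Set.mem_Ioi.mp hx))
    ((hint1.const_mul ((v:ℝ)+1)).sub hint2) htend
  rw [show (0:ℝ)^(v+1) * Qfun (Real.sqrt (c*0)) = 0 by simp, sub_zero] at key
  rw [integral_sub (hint1.const_mul ((v:ℝ)+1)) hint2, integral_const_mul,
    integral_const_mul] at key
  -- Gamma evaluation
  have hgam : ∫ x in Set.Ioi (0:ℝ), x ^ ((v:ℝ)+1/2) * Real.exp (-(c/2)*x)
      = (1/(c/2)) ^ ((v:ℝ)+3/2) * Real.Gamma ((v:ℝ)+3/2) := by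
    rw [← integral_rpow_mul_exp_neg_mul_Ioi (by positivity : (0:ℝ) < (v:ℝ)+3/2)
      (by positivity : (0:ℝ) < c/2)]
    refine setIntegral_congr_fun measurableSet_Ioi fun x hx => ?_
    rw [show (v:ℝ)+3/2-1 = (v:ℝ)+1/2 by ring, neg_mul]
  rw [hgam, Gamma_half_shift] at key
  -- solve for the integral
  have hv1 : ((v:ℝ)+1) ≠ 0 := by positivity
  have hEq : ((v:ℝ)+1) * (∫ x in Set.Ioi (0:ℝ), x ^ v * Qfun (Real.sqrt (c*x)))
      = (c / (2 * Real.sqrt c * Real.sqrt (2*π)))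
        * ((1/(c/2)) ^ ((v:ℝ)+3/2) * (Real.sqrt π * ((2*v+1)‼:ℝ) / 2^(v+1))) := by
    linarith [key]
  -- final algebra
  have hr : ((1/(c/2)) : ℝ) ^ ((v:ℝ)+3/2) = (2/c)^(v+1) * Real.sqrt (2/c) := by
    rw [one_div_div, show ((v:ℝ)+3/2) = ((v+1:ℕ):ℝ) + (1/2:ℝ) by push_cast; ring,
      Real.rpow_add (by positivity), Real.rpow_natCast, ← Real.sqrt_eq_rpow]
  have hdf : ((2*v+2)‼ : ℕ) = 2^(v+1) * (v+1)! := by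
    rw [show 2*v+2 = 2*(v+1) by ring, Nat.doubleFactorial_two_mul]
  have hfac : ((v+1)! : ℝ) = ((v:ℝ)+1) * (v.factorial : ℝ) := by
    rw [Nat.factorial_succ]; push_cast; ring
  have hsc : Real.sqrt c * Real.sqrt c = c := Real.mul_self_sqrt hc.le
  have hs2 : Real.sqrt 2 * Real.sqrt 2 = 2 := Real.mul_self_sqrt (by norm_num)
  have h2c : Real.sqrt (2/c) = Real.sqrt 2 / Real.sqrt c := Real.sqrt_div' 2 hc.le
  have h2π : Real.sqrt (2*π) = Real.sqrt 2 * Real.sqrt π := Real.sqrt_mul (by norm_num) π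
  rw [hr, h2c, h2π] at hEq
  rw [hdf]
  apply mul_left_cancel₀ hv1
  rw [hEq]
  push_cast [hfac]
  have hF : (0:ℝ) < (v.factorial : ℝ) := by positivity
  have hsc0 : Real.sqrt c ≠ 0 := by positivity
  have hs20 : Real.sqrt 2 ≠ 0 := by positivity
  have hsπ0 : Real.sqrt π ≠ 0 := by positivity
  have hc0 : c ≠ 0 := ne_of_gt hc
  field_simp
  ring_nf
  rw [Real.sq_sqrt hc.le]
end
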